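/- Let ∅ ≠ A ⊆ R̃^d and u = [(u_ε)_ε] ∈ G̃(A). Then: (1) for every x̃ = [(x_ε)_ε] ∈ A, the point value u(x̃) = [(u_ε(x_ε))_ε] ∈ C̃ is well-defined, i.e., independent of the chosen representatives of u and of x̃; (2) if x̃ lies in the sharp-topology interior of A and u(ỹ) = 0 for every ỹ in some sharp neighbourhood of x̃, then ∂^α u(x̃) = 0 for every multi-index α; (3) if A is open in the sharp topology, then u = 0 in G̃(A) if and only if u(x̃) = 0 for every x̃ ∈ A. -/

import Mathlib

open Real Set Metric MeasureTheory Filter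

noncomputable section

/-- `P ε` holds for all sufficiently small `ε ∈ (0,1)`. -/
def EvSmall (P : ℝ → Prop) : Prop :=
  ∃ ε₀ : ℝ, 0 < ε₀ ∧ ε₀ < 1 ∧ ∀ ε : ℝ, 0 < ε → ε ≤ ε₀ → P ε

/-- A net `(u_ε)` with values in a seminormed group is moderate. -/
def Moderate {E : Type*} [SeminormedAddGroup E] (u : ℝ → E) : Prop :=
  ∃ N : ℕ, EvSmall fun ε => ‖u ε‖ ≤ ε ^ (-(N : ℝ))

/-- A net `(u_ε)` is negligible. -/
def Negligible {E : Type*} [SeminormedAddGroup E] (u : ℝ → E) : Prop :=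
  ∀ m : ℕ, EvSmall fun ε => ‖u ε‖ ≤ ε ^ (m : ℝ)

/-- Two nets represent the same generalized point. -/
def EqvNet {E : Type*} [SeminormedAddGroup E] (x y : ℝ → E) : Prop :=
  Negligible fun ε => x ε - y ε

/-- The set of generalized points of `Ẽ` (modelled as the moderate nets). -/
def GenPt (E : Type*) [SeminormedAddGroup E] : Set (ℝ → E) := {x | Moderate x}

/-- `x` is a representative of some generalized point belonging to `A`. -/
def IsReprOfPointOf {E : Type*} [SeminormedAddGroup E] (A : Set (ℝ → E)) (x : ℝ → E) : Prop :=
  Moderate x ∧ ∃ a ∈ A, EqvNet x a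

/-- The sharp norm `e^{-v(x)}` of a (moderate) net. -/
noncomputable def sharpNorm {E : Type*} [SeminormedAddGroup E] (x : ℝ → E) : ℝ :=
  sInf {r : ℝ | ∃ b : ℝ, r = Real.exp (-b) ∧ EvSmall fun ε => ‖x ε‖ ≤ ε ^ b}

/-- `A` is open for the sharp topology (as a set of generalized points). -/
def SharpOpen {E : Type*} [SeminormedAddGroup E] (A : Set (ℝ → E)) : Prop :=
  (∀ x ∈ A, Moderate x) ∧
  ∀ x ∈ A, ∃ r > 0, ∀ y : ℝ → E, Moderate y →
    sharpNorm (fun ε => y ε - x ε) < r → y ∈ A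

/-- `B` is a sharp neighbourhood of `A`. -/
def IsSharpNbhdOf {E : Type*} [SeminormedAddGroup E] (B A : Set (ℝ → E)) : Prop :=
  A ⊆ B ∧ ∀ x ∈ A, ∃ r > 0, ∀ y : ℝ → E, Moderate y →
    sharpNorm (fun ε => y ε - x ε) < r → y ∈ B

/-- The internal set with representative `(Aε)`. -/
def InternalSet {E : Type*} [SeminormedAddGroup E] (Aε : ℝ → Set E) : Set (ℝ → E) :=
  {x | Moderate x ∧ ∃ y : ℝ → E, EqvNet x y ∧ EvSmall fun ε => y ε ∈ Aε ε}

/-- `(Aε)` is a sharply bounded representative. -/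
def SharplyBddRep {E : Type*} [SeminormedAddGroup E] (Aε : ℝ → Set E) : Prop :=
  ∃ M : ℕ, EvSmall fun ε => ∀ x ∈ Aε ε, ‖x‖ ≤ ε ^ (-(M : ℝ))

/-- A set of generalized points is sharply bounded. -/
def SharplyBddSet {E : Type*} [SeminormedAddGroup E] (A : Set (ℝ → E)) : Prop :=
  ∃ C : ℝ, ∀ x ∈ A, sharpNorm x ≤ C

/-- The interleaved closure of a set of generalized points. -/
def interleaved {E : Type*} [SeminormedAddGroup E] (A : Set (ℝ → E)) : Set (ℝ → E) :=
  {x | ∃ (m : ℕ) (S : Fin m → Set ℝ) (y : Fin m → ℝ → E),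
    (∀ ε ∈ Set.Ioo (0:ℝ) 1, ∃! j, ε ∈ S j) ∧ (∀ j, y j ∈ A) ∧
    ∀ ε ∈ Set.Ioo (0:ℝ) 1, ∀ j, ε ∈ S j → x ε = y j ε}

/-- A net of smooth functions (smooth for each ε ∈ (0,1)). -/
def SmoothNet {V : Type*} [NormedAddCommGroup V] [NormedSpace ℝ V] (u : ℝ → V → ℂ) : Prop :=
  ∀ ε : ℝ, 0 < ε → ε < 1 → ContDiff ℝ (⊤ : ℕ∞) (u ε)

/-- The nets belonging to `E_M(A)` : all derivatives are moderate along the points of `A`. -/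
def EMod {V : Type*} [NormedAddCommGroup V] [NormedSpace ℝ V]
    (A : Set (ℝ → V)) (u : ℝ → V → ℂ) : Prop :=
  SmoothNet u ∧ ∀ (n : ℕ) (x : ℝ → V), IsReprOfPointOf A x →
    Moderate fun ε => iteratedFDeriv ℝ n (u ε) (x ε)

/-- The nets belonging to `N(A)` : all derivatives are negligible along the points of `A`. -/
def NNeg {V : Type*} [NormedAddCommGroup V] [NormedSpace ℝ V]
    (A : Set (ℝ → V)) (u : ℝ → V → ℂ) : Prop :=
  SmoothNet u ∧ ∀ (n : ℕ) (x : ℝ → V), IsReprOfPointOf A x →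
    Negligible fun ε => iteratedFDeriv ℝ n (u ε) (x ε)

/-- `u` and `v` define the same element of `G̃(A)`. -/
def GEq {V : Type*} [NormedAddCommGroup V] [NormedSpace ℝ V]
    (A : Set (ℝ → V)) (u v : ℝ → V → ℂ) : Prop :=
  NNeg A fun ε z => u ε z - v ε z

/-- `x̃ ≤ ỹ` in `R̃` (for the given representatives). -/
def RleNet (x y : ℝ → ℝ) : Prop := ∀ m : ℕ, EvSmall fun ε => x ε ≤ y ε + ε ^ (m : ℝ)

/-- `x̃ ≫ 0` in `R̃`. -/
def StrPosNet (x : ℝ → ℝ) : Prop := ∃ m : ℕ, EvSmall fun ε => ε ^ (m : ℝ) ≤ x ε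

/-- `x̃ ≪ ỹ` in `R̃`. -/
def RltlNet (x y : ℝ → ℝ) : Prop := StrPosNet fun ε => y ε - x ε

/-- The operator `∂̄ = ½(∂ₓ + i ∂_y)` on smooth functions `ℂ → ℂ`. -/
def dbar (u : ℂ → ℂ) (z : ℂ) : ℂ :=
  (fderiv ℝ u z 1 + Complex.I * fderiv ℝ u z Complex.I) / 2

/-- The iterated derivative `D^k u = ∂ₓ^k u`. -/
def Dpow : ℕ → (ℂ → ℂ) → ℂ → ℂ
  | 0, u => u
  | (k+1), u => Dpow k fun z => fderiv ℝ u z 1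

/-- `u ∈ G̃_H(A)` : generalized holomorphic functions on `A ⊆ C̃`. -/
def GHol (A : Set (ℝ → ℂ)) (u : ℝ → ℂ → ℂ) : Prop :=
  EMod A u ∧ NNeg A fun ε => dbar (u ε)

/-- A continuous, piecewise `C¹` function on `[0,1]` (with its partition). -/
structure PwC1Path where
  toFun : ℝ → ℂ
  n : ℕ
  pt : Fin (n + 1) → ℝ
  mono : Monotone pt
  first : pt 0 = 0
  last : pt (Fin.last n) = 1
  cont : ContinuousOn toFun (Set.Icc 0 1)
  piece : ∀ i : Fin n, ContDiffOn ℝ 1 toFun (Set.Icc (pt i.castSucc) (pt i.succ))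

/-- A net of piecewise `C¹` paths which is moderate for the `C¹_pw` norm. -/
def PathModerate (γ : ℝ → PwC1Path) : Prop :=
  (∃ N : ℕ, EvSmall fun ε => ∀ t ∈ Set.Icc (0:ℝ) 1, ‖(γ ε).toFun t‖ ≤ ε ^ (-(N:ℝ))) ∧
  (∃ N : ℕ, EvSmall fun ε => ∀ᵐ t ∂(volume.restrict (Set.Icc (0:ℝ) 1)),
      ‖deriv (γ ε).toFun t‖ ≤ ε ^ (-(N:ℝ)))

/-- Two nets of paths represent the same generalized path
(their difference is negligible for the `C¹_pw` norm). -/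
def PathEqv (γ γ' : ℝ → PwC1Path) : Prop :=
  ∀ m : ℕ, EvSmall fun ε =>
    (∀ t ∈ Set.Icc (0:ℝ) 1, ‖(γ ε).toFun t - (γ' ε).toFun t‖ ≤ ε ^ (m:ℝ)) ∧
    (∀ᵐ t ∂(volume.restrict (Set.Icc (0:ℝ) 1)),
      ‖deriv (γ ε).toFun t - deriv (γ' ε).toFun t‖ ≤ ε ^ (m:ℝ))

/-- `γ` is a (generalized) path in `A ⊆ C̃`. -/
def PathIn (A : Set (ℝ → ℂ)) (γ : ℝ → PwC1Path) : Prop :=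
  PathModerate γ ∧ ∀ t : ℝ → ℝ, (∀ ε, t ε ∈ Set.Icc (0:ℝ) 1) →
    IsReprOfPointOf A fun ε => (γ ε).toFun (t ε)

/-- The complex path integral `∫_γ u(z) dz` along a piecewise `C¹` path. -/
noncomputable def pathIntegral (γ : PwC1Path) (u : ℂ → ℂ) : ℂ :=
  ∑ i : Fin γ.n, ∫ t in (γ.pt i.castSucc)..(γ.pt i.succ),
    u (γ.toFun t) * derivWithin γ.toFun (Set.Icc (γ.pt i.castSucc) (γ.pt i.succ)) t

/-- The path is closed: `γ(0) = γ(1)` as generalized points. -/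
def ClosedPath (γ : ℝ → PwC1Path) : Prop :=
  Negligible fun ε => (γ ε).toFun 1 - (γ ε).toFun 0

/-- A continuous, piecewise `C¹` function on `[0,1]²` (with its grid partition). -/
structure PwC1Homotopy where
  toFun : ℝ × ℝ → ℂ
  n : ℕ
  pt : Fin (n + 1) → ℝ
  mono : Monotone pt
  first : pt 0 = 0
  last : pt (Fin.last n) = 1
  cont : ContinuousOn toFun (Set.Icc 0 1 ×ˢ Set.Icc 0 1)
  piece : ∀ i j : Fin n, ContDiffOn ℝ 1 toFun
    (Set.Icc (pt i.castSucc) (pt i.succ) ×ˢ Set.Icc (pt j.castSucc) (pt j.succ))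

/-- A moderate net of piecewise `C¹` functions on the square. -/
def HomotopyModerate (H : ℝ → PwC1Homotopy) : Prop :=
  (∃ N : ℕ, EvSmall fun ε => ∀ p ∈ (Set.Icc (0:ℝ) 1 ×ˢ Set.Icc (0:ℝ) 1),
      ‖(H ε).toFun p‖ ≤ ε ^ (-(N:ℝ))) ∧
  (∃ N : ℕ, EvSmall fun ε =>
      ∀ᵐ p ∂(volume.restrict ((Set.Icc (0:ℝ) 1 ×ˢ Set.Icc (0:ℝ) 1) : Set (ℝ × ℝ))),
      ‖fderiv ℝ (H ε).toFun p‖ ≤ ε ^ (-(N:ℝ)))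

/-- `H` is a homotopy in `A` between the closed paths `γ` and `γ'`. -/
def IsHomotopyBetween (A : Set (ℝ → ℂ)) (γ γ' : ℝ → PwC1Path)
    (H : ℝ → PwC1Homotopy) : Prop :=
  HomotopyModerate H ∧
  (∀ t : ℝ → ℝ, (∀ ε, t ε ∈ Set.Icc (0:ℝ) 1) →
    (Negligible fun ε => (H ε).toFun (t ε, 0) - (γ ε).toFun (t ε)) ∧
    (Negligible fun ε => (H ε).toFun (t ε, 1) - (γ' ε).toFun (t ε))) ∧
  (∀ s : ℝ → ℝ, (∀ ε, s ε ∈ Set.Icc (0:ℝ) 1) →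
    Negligible fun ε => (H ε).toFun (0, s ε) - (H ε).toFun (1, s ε)) ∧
  (∀ t s : ℝ → ℝ, (∀ ε, t ε ∈ Set.Icc (0:ℝ) 1) → (∀ ε, s ε ∈ Set.Icc (0:ℝ) 1) →
    IsReprOfPointOf A fun ε => (H ε).toFun (t ε, s ε))

/-! Point values are well defined because on the segment between two representatives of the
same point, `‖D u_ε‖` attains its maximum at a net that again represents this point; that
maximum is therefore moderate, and the mean value theorem makes the difference of the values
negligible.

For the derivatives, let `u` vanish on a sharp ball around `x` and let `y` lie in that ball.
Comparing `u_ε(y_ε)` with `u_ε(y_ε + ε^p h_ε)`, where `h_ε` nearly realises the norm of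
`D u_ε(y_ε)`, and bounding the Taylor remainder by the moderate second derivative at a
maximising point gives `‖D u_ε(y_ε)‖ = O(ε^m)` once `p` is large. The perturbed points stay in
the ball since the sharp norm is ultrametric. Induction on the order of the derivative gives
(2), and on a sharply open set, where every representative lies in such a ball, (3). -/

universe u

open Topology
open scoped ContDiff

section Nets

variable {E : Type*} [SeminormedAddGroup E]

theorem evSmall_iff_eventually {P : ℝ → Prop} : EvSmall P ↔ ∀ᶠ ε in 𝓝[>] 0, P ε := by
  constructor
  · rintro ⟨ε₀, hε₀, -, hP⟩
    filter_upwards [Ioc_mem_nhdsGT hε₀] with ε hε using hP ε hε.1 hε.2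
  · intro h
    obtain ⟨ε₁, hε₁, hsub⟩ := mem_nhdsGT_iff_exists_Ioo_subset.1 h
    have hε₁' : 0 < ε₁ := hε₁
    refine ⟨min (ε₁ / 2) (1 / 2), by positivity, by linarith [min_le_right (ε₁ / 2) (1 / 2)],
      fun ε hε hεle => hsub ⟨hε, ?_⟩⟩
    linarith [min_le_left (ε₁ / 2) (1 / 2)]

theorem negligible_iff_eventually {u : ℝ → E} :
    Negligible u ↔ ∀ m : ℕ, ∀ᶠ ε in 𝓝[>] 0, ‖u ε‖ ≤ ε ^ m := by
  simp only [Negligible, evSmall_iff_eventually, Real.rpow_natCast]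

theorem moderate_iff_eventually {u : ℝ → E} :
    Moderate u ↔ ∃ N : ℕ, ∀ᶠ ε in 𝓝[>] 0, ε ^ N * ‖u ε‖ ≤ 1 := by
  simp only [Moderate, evSmall_iff_eventually]
  refine exists_congr fun N => eventually_congr ?_
  filter_upwards [self_mem_nhdsWithin] with ε (hε : 0 < ε)
  rw [Real.rpow_neg hε.le, Real.rpow_natCast, ← one_div, le_div_iff₀ (by positivity), mul_comm]

theorem eventually_const_mul_le_one (C : ℝ) : ∀ᶠ ε in 𝓝[>] (0 : ℝ), C * ε ≤ 1 := by
  have hlim : Tendsto (fun ε : ℝ => C * ε) (𝓝[>] 0) (𝓝 0) := by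
    simpa using ((continuous_const_mul C).tendsto 0).mono_left nhdsWithin_le_nhds
  exact hlim.eventually (Iic_mem_nhds one_pos)

theorem eventually_const_mul_pow_le (C : ℝ) (m : ℕ) :
    ∀ᶠ ε in 𝓝[>] (0 : ℝ), C * ε ^ (m + 1) ≤ ε ^ m := by
  filter_upwards [eventually_const_mul_le_one C, self_mem_nhdsWithin] with ε hC (hε : 0 < ε)
  calc C * ε ^ (m + 1) = C * ε * ε ^ m := by ring
    _ ≤ 1 * ε ^ m := by gcongr
    _ = ε ^ m := one_mul _

theorem negligible_of_eventually_le_const_mul {u : ℝ → E} (C : ℝ)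
    (h : ∀ m : ℕ, ∀ᶠ ε in 𝓝[>] 0, ‖u ε‖ ≤ C * ε ^ m) : Negligible u :=
  negligible_iff_eventually.2 fun m => by
    filter_upwards [h (m + 1), eventually_const_mul_pow_le C m] with ε h₁ h₂ using h₁.trans h₂

theorem Negligible.of_norm_le {F : Type*} [SeminormedAddGroup F] {u : ℝ → E} {v : ℝ → F}
    (hv : Negligible v) (h : ∀ᶠ ε in 𝓝[>] 0, ‖u ε‖ ≤ ‖v ε‖) : Negligible u :=
  negligible_iff_eventually.2 fun m => by
    filter_upwards [h, negligible_iff_eventually.1 hv m] with ε h₁ h₂ using h₁.trans h₂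

theorem Moderate.of_norm_le {F : Type*} [SeminormedAddGroup F] {u : ℝ → E} {v : ℝ → F}
    (hv : Moderate v) (h : ∀ᶠ ε in 𝓝[>] 0, ‖u ε‖ ≤ ‖v ε‖) : Moderate u := by
  obtain ⟨N, hN⟩ := hv
  refine ⟨N, evSmall_iff_eventually.2 ?_⟩
  filter_upwards [h, evSmall_iff_eventually.1 hN] with ε h₁ h₂ using h₁.trans h₂

theorem Negligible.add {u v : ℝ → E} (hu : Negligible u) (hv : Negligible v) :
    Negligible fun ε => u ε + v ε :=
  negligible_of_eventually_le_const_mul 2 fun m => by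
    filter_upwards [negligible_iff_eventually.1 hu m, negligible_iff_eventually.1 hv m]
      with ε hu hv
    linarith [norm_add_le (u ε) (v ε)]

theorem EqvNet.refl (x : ℝ → E) : EqvNet x x :=
  negligible_iff_eventually.2 fun m => by
    filter_upwards [self_mem_nhdsWithin] with ε (hε : 0 < ε)
    simpa using pow_nonneg hε.le m

theorem EqvNet.trans {x y z : ℝ → E} (hxy : EqvNet x y) (hyz : EqvNet y z) : EqvNet x z := by
  simpa only [EqvNet, sub_add_sub_cancel] using hxy.add hyz

theorem moderate_of_eventually_norm_le_one {u : ℝ → E} (h : ∀ᶠ ε in 𝓝[>] 0, ‖u ε‖ ≤ 1) :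
    Moderate u :=
  moderate_iff_eventually.2 ⟨0, by simpa using h⟩

theorem Negligible.moderate {u : ℝ → E} (hu : Negligible u) : Moderate u :=
  moderate_of_eventually_norm_le_one <| by simpa using negligible_iff_eventually.1 hu 0

theorem Moderate.of_norm_le_add {F G : Type*} [SeminormedAddGroup F] [SeminormedAddGroup G]
    {u : ℝ → F} {v : ℝ → G} {w : ℝ → E} (hu : Moderate u) (hv : Moderate v)
    (h : ∀ ε, ‖w ε‖ ≤ ‖u ε‖ + ‖v ε‖) : Moderate w := by
  obtain ⟨M, hM⟩ := moderate_iff_eventually.1 hu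
  obtain ⟨N, hN⟩ := moderate_iff_eventually.1 hv
  refine moderate_iff_eventually.2 ⟨M + N + 1, ?_⟩
  filter_upwards [hM, hN, eventually_const_mul_le_one 2, self_mem_nhdsWithin,
    Ioo_mem_nhdsGT one_pos] with ε huε hvε h2 (hε : 0 < ε) hε1
  have hεM : ε ^ M ≤ 1 := pow_le_one₀ hε.le hε1.2.le
  have hεN : ε ^ N ≤ 1 := pow_le_one₀ hε.le hε1.2.le
  calc ε ^ (M + N + 1) * ‖w ε‖ ≤ ε ^ (M + N + 1) * (‖u ε‖ + ‖v ε‖) := by gcongr; exact h ε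
    _ = ε * (ε ^ N * (ε ^ M * ‖u ε‖) + ε ^ M * (ε ^ N * ‖v ε‖)) := by ring
    _ ≤ ε * (1 * 1 + 1 * 1) := by gcongr
    _ ≤ 1 := by linarith

theorem Moderate.add {u v : ℝ → E} (hu : Moderate u) (hv : Moderate v) :
    Moderate fun ε => u ε + v ε :=
  hu.of_norm_le_add hv fun _ => norm_add_le _ _

theorem Moderate.sub {u v : ℝ → E} (hu : Moderate u) (hv : Moderate v) :
    Moderate fun ε => u ε - v ε :=
  hu.of_norm_le_add hv fun _ => norm_sub_le _ _

theorem IsReprOfPointOf.of_eqvNet {A : Set (ℝ → E)} {x z : ℝ → E} (hx : IsReprOfPointOf A x)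
    (hzx : EqvNet z x) : IsReprOfPointOf A z := by
  obtain ⟨hxmod, a, ha, hxa⟩ := hx
  refine ⟨?_, a, ha, hzx.trans hxa⟩
  simpa using hzx.moderate.add hxmod

theorem isReprOfPointOf_of_mem {A : Set (ℝ → E)} {x : ℝ → E} (hx : Moderate x) (hxA : x ∈ A) :
    IsReprOfPointOf A x :=
  ⟨hx, x, hxA, EqvNet.refl x⟩

theorem eventually_nhdsGT_zero_of_forall_lt_one {P : ℝ → Prop}
    (h : ∀ ε : ℝ, 0 < ε → ε < 1 → P ε) : ∀ᶠ ε in 𝓝[>] 0, P ε := by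
  filter_upwards [Ioo_mem_nhdsGT one_pos] with ε hε using h ε hε.1 hε.2

end Nets

section SharpBall

variable {E : Type*} [SeminormedAddGroup E]

theorem sharpNorm_nonneg (w : ℝ → E) : 0 ≤ sharpNorm w :=
  Real.sInf_nonneg (by rintro _ ⟨b, rfl, -⟩; exact (exp_pos _).le)

theorem sharpNorm_lt_of_eventually_le {w : ℝ → E} {b r : ℝ} (hb : exp (-b) < r)
    (h : ∀ᶠ ε in 𝓝[>] 0, ‖w ε‖ ≤ ε ^ b) : sharpNorm w < r := by
  unfold sharpNorm
  refine (csInf_le ⟨0, ?_⟩ (by exact ⟨b, rfl, evSmall_iff_eventually.2 h⟩)).trans_lt hb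
  rintro _ ⟨b, rfl, -⟩
  exact (exp_pos _).le

theorem Moderate.exists_eventually_le_of_sharpNorm_lt {w : ℝ → E} {r : ℝ} (hw : Moderate w)
    (h : sharpNorm w < r) : ∃ b, exp (-b) < r ∧ ∀ᶠ ε in 𝓝[>] 0, ‖w ε‖ ≤ ε ^ b := by
  obtain ⟨N, hN⟩ := hw
  unfold sharpNorm at h
  obtain ⟨_, ⟨b, rfl, hb⟩, hlt⟩ := exists_lt_of_csInf_lt (by exact ⟨_, -(N : ℝ), rfl, hN⟩) h
  exact ⟨b, hlt, evSmall_iff_eventually.1 hb⟩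

theorem sharpNorm_lt_of_eventually_le_pow {w : ℝ → E} {q : ℕ} {r : ℝ} (hq : exp (-q) < r)
    (h : ∀ᶠ ε in 𝓝[>] 0, ‖w ε‖ ≤ ε ^ q) : sharpNorm w < r :=
  sharpNorm_lt_of_eventually_le hq (by simpa only [Real.rpow_natCast] using h)

theorem exists_nat_exp_neg_lt {r : ℝ} (hr : 0 < r) : ∃ q : ℕ, exp (-q) < r := by
  obtain ⟨q, hq⟩ := exists_nat_gt (-log r)
  exact ⟨q, (lt_log_iff_exp_lt hr).1 (by linarith)⟩

theorem Negligible.sharpNorm_lt {w : ℝ → E} (hw : Negligible w) {r : ℝ} (hr : 0 < r) :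
    sharpNorm w < r :=
  let ⟨q, hq⟩ := exists_nat_exp_neg_lt hr
  sharpNorm_lt_of_eventually_le_pow hq (negligible_iff_eventually.1 hw q)

theorem sharpNorm_add_lt {v w : ℝ → E} (hv : Moderate v) (hw : Moderate w) {r : ℝ}
    (hvr : sharpNorm v < r) (hwr : sharpNorm w < r) : sharpNorm (fun ε => v ε + w ε) < r := by
  obtain ⟨b, hbr, hb⟩ := hv.exists_eventually_le_of_sharpNorm_lt hvr
  obtain ⟨c, hcr, hc⟩ := hw.exists_eventually_le_of_sharpNorm_lt hwr
  have hr : 0 < r := (exp_pos _).trans hbr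
  have hb' : -b < log r := (lt_log_iff_exp_lt hr).2 hbr
  have hc' : -c < log r := (lt_log_iff_exp_lt hr).2 hcr
  obtain ⟨β, hβb, hβc, hβ⟩ : ∃ β, β ≤ b ∧ β ≤ c ∧ -log r < β :=
    ⟨min b c, min_le_left b c, min_le_right b c, lt_min (by linarith) (by linarith)⟩
  obtain ⟨δ, hδ, hδβ⟩ : ∃ δ, 0 < δ ∧ -log r < β - δ := ⟨(β + log r) / 2, by linarith, by linarith⟩
  refine sharpNorm_lt_of_eventually_le (b := β - δ) ((lt_log_iff_exp_lt hr).1 (by linarith)) ?_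
  have hlim : Tendsto (fun ε : ℝ => ε ^ δ) (𝓝[>] 0) (𝓝 0) := by
    simpa [zero_rpow hδ.ne'] using
      (continuousAt_rpow_const 0 δ (Or.inr hδ.le)).tendsto.mono_left nhdsWithin_le_nhds
  filter_upwards [hb, hc, hlim.eventually (Iic_mem_nhds one_half_pos), self_mem_nhdsWithin,
    Ioo_mem_nhdsGT one_pos] with ε hbε hcε (hδε : ε ^ δ ≤ 1 / 2) (hε : 0 < ε) hε1
  have hbε' : ε ^ b ≤ ε ^ β := rpow_le_rpow_of_exponent_ge hε hε1.2.le hβb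
  have hcε' : ε ^ c ≤ ε ^ β := rpow_le_rpow_of_exponent_ge hε hε1.2.le hβc
  have hsplit : ε ^ β = ε ^ δ * ε ^ (β - δ) := by rw [← rpow_add hε]; ring_nf
  have hpow : 0 ≤ ε ^ (β - δ) := (rpow_pos_of_pos hε _).le
  calc ‖v ε + w ε‖ ≤ ‖v ε‖ + ‖w ε‖ := norm_add_le _ _
    _ ≤ 2 * ε ^ δ * ε ^ (β - δ) := by rw [hsplit] at hbε' hcε'; linarith
    _ ≤ 2 * (1 / 2) * ε ^ (β - δ) := by gcongr
    _ = ε ^ (β - δ) := by ring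

def sharpBall (x : ℝ → E) (r : ℝ) : Set (ℝ → E) :=
  {y | Moderate y ∧ sharpNorm (fun ε => y ε - x ε) < r}

theorem pos_of_mem_sharpBall {x y : ℝ → E} {r : ℝ} (hy : y ∈ sharpBall x r) : 0 < r :=
  (sharpNorm_nonneg _).trans_lt hy.2

theorem EqvNet.mem_sharpBall {x y : ℝ → E} {r : ℝ} (hyx : EqvNet y x) (hy : Moderate y)
    (hr : 0 < r) : y ∈ sharpBall x r :=
  ⟨hy, hyx.sharpNorm_lt hr⟩

theorem mem_sharpBall_of_eventually_norm_sub_le {x y w : ℝ → E} {r : ℝ} {q : ℕ}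
    (hx : Moderate x) (hy : y ∈ sharpBall x r) (hq : exp (-q) < r)
    (hw : ∀ᶠ ε in 𝓝[>] 0, ‖w ε - y ε‖ ≤ ε ^ q) : w ∈ sharpBall x r := by
  have hwy : Moderate fun ε => w ε - y ε := by
    refine moderate_of_eventually_norm_le_one ?_
    filter_upwards [hw, Ioo_mem_nhdsGT one_pos] with ε hε hε1
    exact hε.trans (pow_le_one₀ hε1.1.le hε1.2.le)
  refine ⟨by simpa using hwy.add hy.1, ?_⟩
  simpa using sharpNorm_add_lt hwy (hy.1.sub hx) (sharpNorm_lt_of_eventually_le_pow hq hw) hy.2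

end SharpBall

section Calculus

variable {V W : Type*} [NormedAddCommGroup V] [NormedSpace ℝ V]
  [NormedAddCommGroup W] [NormedSpace ℝ W]

theorem ContinuousLinearMap.exists_norm_le_one_opNorm_le_two_mul (T : V →L[ℝ] W) :
    ∃ h : V, ‖h‖ ≤ 1 ∧ ‖T‖ ≤ 2 * ‖T h‖ := by
  rcases eq_or_ne T 0 with rfl | hT
  · exact ⟨0, by simp, by simp⟩
  · obtain ⟨h, hh, hlt⟩ := T.exists_lt_apply_of_lt_opNorm (half_lt_self (norm_pos_iff.2 hT))
    exact ⟨h, hh.le, by linarith⟩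

theorem exists_net_isMaxOn_segment (φ : ℝ → V → ℝ) (a b : ℝ → V) :
    ∃ z : ℝ → V, ∀ ε, Continuous (φ ε) →
      z ε ∈ segment ℝ (a ε) (b ε) ∧ IsMaxOn (φ ε) (segment ℝ (a ε) (b ε)) (z ε) := by
  have hmax : ∀ ε, ∃ z, Continuous (φ ε) →
      z ∈ segment ℝ (a ε) (b ε) ∧ IsMaxOn (φ ε) (segment ℝ (a ε) (b ε)) z := fun ε => by
    by_cases hφ : Continuous (φ ε)
    · have hK : IsCompact (segment ℝ (a ε) (b ε)) :=
        Path.range_segment (a ε) (b ε) ▸ isCompact_range (Path.segment (a ε) (b ε)).continuous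
      obtain ⟨z, hz, hzmax⟩ := hK.exists_isMaxOn ⟨a ε, left_mem_segment ℝ _ _⟩ hφ.continuousOn
      exact ⟨z, fun _ => ⟨hz, hzmax⟩⟩
    · exact ⟨a ε, fun h => (hφ h).elim⟩
  choose z hz using hmax
  exact ⟨z, hz⟩

theorem Convex.norm_sub_sub_fderiv_le {g : V → W} (hg : ContDiff ℝ 2 g) {s : Set V}
    (hs : Convex ℝ s) {C : ℝ} (hC : ∀ w ∈ s, ‖fderiv ℝ (fderiv ℝ g) w‖ ≤ C) {a b : V}
    (ha : a ∈ s) (hb : b ∈ s) : ‖g b - g a - fderiv ℝ g a (b - a)‖ ≤ C * ‖b - a‖ ^ 2 := by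
  have hg₁ : Differentiable ℝ g := hg.differentiable (by norm_num)
  have hg₂ : Differentiable ℝ (fderiv ℝ g) :=
    (hg.fderiv_right (m := 1) (by norm_num)).differentiable one_ne_zero
  have hC₀ : 0 ≤ C := (norm_nonneg (fderiv ℝ (fderiv ℝ g) a)).trans (hC a ha)
  have hDg : ∀ w ∈ segment ℝ a b, ‖fderiv ℝ g w - fderiv ℝ g a‖ ≤ C * ‖b - a‖ := fun w hw =>
    calc ‖fderiv ℝ g w - fderiv ℝ g a‖ ≤ C * ‖w - a‖ :=
          hs.norm_image_sub_le_of_norm_fderiv_le (fun v _ => hg₂ v) hC ha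
            (hs.segment_subset ha hb hw)
      _ ≤ C * ‖b - a‖ := by gcongr; exact norm_sub_le_of_mem_segment hw
  calc ‖g b - g a - fderiv ℝ g a (b - a)‖ ≤ C * ‖b - a‖ * ‖b - a‖ :=
        (convex_segment a b).norm_image_sub_le_of_norm_fderiv_le' (fun v _ => hg₁ v) hDg
          (left_mem_segment ℝ a b) (right_mem_segment ℝ a b)
    _ = C * ‖b - a‖ ^ 2 := by ring

theorem mul_norm_fderiv_apply_le {g : V → W} (hg : ContDiff ℝ 2 g) {y d : V} {s C : ℝ}
    (hs : s ∈ Icc (0 : ℝ) 1) (hC : ∀ w ∈ segment ℝ y (y + d), ‖fderiv ℝ (fderiv ℝ g) w‖ ≤ C) :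
    s * ‖fderiv ℝ g y d‖ ≤ ‖g (y + s • d)‖ + ‖g y‖ + C * (s * ‖d‖) ^ 2 := by
  have hmem : y + s • d ∈ segment ℝ y (y + d) :=
    (convex_segment _ _).add_smul_mem (left_mem_segment ℝ _ _) (right_mem_segment ℝ _ _) hs
  have htaylor := (convex_segment _ _).norm_sub_sub_fderiv_le hg hC (left_mem_segment ℝ _ _) hmem
  rw [add_sub_cancel_left, norm_smul, Real.norm_of_nonneg hs.1] at htaylor
  set R := g (y + s • d) - g y - fderiv ℝ g y (s • d)
  calc s * ‖fderiv ℝ g y d‖ = ‖(g (y + s • d) - g y) - R‖ := by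
        rw [sub_sub_cancel, map_smul, norm_smul, Real.norm_of_nonneg hs.1]
    _ ≤ ‖g (y + s • d)‖ + ‖g y‖ + ‖R‖ :=
        (norm_sub_le _ _).trans (by gcongr; exact norm_sub_le _ _)
    _ ≤ ‖g (y + s • d)‖ + ‖g y‖ + C * (s * ‖d‖) ^ 2 := by gcongr

end Calculus

section GeneralizedFunctions

variable {V W : Type*} [NormedAddCommGroup V] [NormedSpace ℝ V]
  [NormedAddCommGroup W] [NormedSpace ℝ W]

theorem EqvNet.negligible_apply_sub_apply {A : Set (ℝ → V)} {g : ℝ → V → W} {x y : ℝ → V}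
    (hg : ∀ᶠ ε in 𝓝[>] 0, ContDiff ℝ 1 (g ε))
    (hDg : ∀ z, IsReprOfPointOf A z → Moderate fun ε => fderiv ℝ (g ε) (z ε))
    (hx : IsReprOfPointOf A x) (hxy : EqvNet x y) :
    Negligible fun ε => g ε (x ε) - g ε (y ε) := by
  obtain ⟨z, hz⟩ := exists_net_isMaxOn_segment (fun ε w => ‖fderiv ℝ (g ε) w‖) x y
  have hz' := hg.mono fun ε hε => hz ε (hε.continuous_fderiv one_ne_zero).norm
  have hzx : EqvNet z x := by
    refine hxy.of_norm_le (hz'.mono fun ε hε => ?_)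
    simpa only [norm_sub_rev (y ε)] using norm_sub_le_of_mem_segment hε.1
  obtain ⟨N, hN⟩ := moderate_iff_eventually.1 (hDg z (hx.of_eqvNet hzx))
  refine negligible_iff_eventually.2 fun m => ?_
  filter_upwards [hg, hz', hN, negligible_iff_eventually.1 hxy (N + m), self_mem_nhdsWithin]
    with ε hgε ⟨_, hmax⟩ hNε hxyε (hε : 0 < ε)
  calc ‖g ε (x ε) - g ε (y ε)‖ ≤ ‖fderiv ℝ (g ε) (z ε)‖ * ‖x ε - y ε‖ :=
        (convex_segment _ _).norm_image_sub_le_of_norm_fderiv_le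
          (fun w _ => hgε.differentiable one_ne_zero w) (fun w hw => hmax hw)
          (right_mem_segment ℝ _ _) (left_mem_segment ℝ _ _)
    _ ≤ ‖fderiv ℝ (g ε) (z ε)‖ * ε ^ (N + m) := by gcongr
    _ = ε ^ N * ‖fderiv ℝ (g ε) (z ε)‖ * ε ^ m := by ring
    _ ≤ ε ^ m := mul_le_of_le_one_left (pow_nonneg hε.le m) hNε

theorem mem_sharpBall_of_eventually_mem_segment {x y d w : ℝ → V} {r : ℝ} {q : ℕ}
    (hx : Moderate x) (hy : y ∈ sharpBall x r) (hq : exp (-q) < r)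
    (hd : ∀ᶠ ε in 𝓝[>] 0, ‖d ε‖ ≤ ε ^ q)
    (hw : ∀ᶠ ε in 𝓝[>] 0, w ε ∈ segment ℝ (y ε) (y ε + d ε)) : w ∈ sharpBall x r := by
  refine mem_sharpBall_of_eventually_norm_sub_le hx hy hq ?_
  filter_upwards [hd, hw] with ε hdε hwε
  have := norm_sub_le_of_mem_segment hwε
  rw [add_sub_cancel_left] at this
  exact this.trans hdε

theorem negligible_fderiv_of_negligible_on_sharpBall {g : ℝ → V → W} {x y : ℝ → V} {r : ℝ}
    (hx : Moderate x) (hg : ∀ᶠ ε in 𝓝[>] 0, ContDiff ℝ 2 (g ε))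
    (hD2 : ∀ w ∈ sharpBall x r, Moderate fun ε => fderiv ℝ (fderiv ℝ (g ε)) (w ε))
    (hval : ∀ w ∈ sharpBall x r, Negligible fun ε => g ε (w ε)) (hy : y ∈ sharpBall x r) :
    Negligible fun ε => fderiv ℝ (g ε) (y ε) := by
  obtain ⟨q, hq⟩ := exists_nat_exp_neg_lt (pos_of_mem_sharpBall hy)
  choose h hh hTh using fun ε => (fderiv ℝ (g ε) (y ε)).exists_norm_le_one_opNorm_le_two_mul
  have hd : ∀ᶠ ε in 𝓝[>] 0, ‖ε ^ q • h ε‖ ≤ ε ^ q := by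
    filter_upwards [self_mem_nhdsWithin] with ε (hε : 0 < ε)
    rw [norm_smul, Real.norm_of_nonneg (pow_nonneg hε.le q)]
    exact mul_le_of_le_one_right (pow_nonneg hε.le q) (hh ε)
  obtain ⟨z, hz⟩ := exists_net_isMaxOn_segment (fun ε w => ‖fderiv ℝ (fderiv ℝ (g ε)) w‖) y
    (fun ε => y ε + ε ^ q • h ε)
  have hz' := hg.mono fun ε hε =>
    hz ε ((hε.fderiv_right (m := 1) (by norm_num)).continuous_fderiv one_ne_zero).norm
  have hzB : z ∈ sharpBall x r :=
    mem_sharpBall_of_eventually_mem_segment hx hy hq hd (hz'.mono fun ε hε => hε.1)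
  obtain ⟨N, hN⟩ := moderate_iff_eventually.1 (hD2 z hzB)
  -- Perturbing `y` by `ε ^ (N + m + q)` makes the Taylor remainder, of size
  -- `ε ^ (-N) * ε ^ (2 * (N + m + q))`, small against `ε ^ (N + m + q) * ε ^ m`.
  refine negligible_of_eventually_le_const_mul 6 fun m => ?_
  have hs : ∀ᶠ ε in 𝓝[>] 0, ε ^ (N + m) ∈ Icc (0 : ℝ) 1 := by
    filter_upwards [Ioo_mem_nhdsGT one_pos] with ε hε
    exact ⟨pow_nonneg hε.1.le _, pow_le_one₀ hε.1.le hε.2.le⟩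
  have hy'B : (fun ε => y ε + ε ^ (N + m) • ε ^ q • h ε) ∈ sharpBall x r :=
    mem_sharpBall_of_eventually_mem_segment hx hy hq hd <| hs.mono fun ε hsε =>
      (convex_segment _ _).add_smul_mem (left_mem_segment ℝ _ _) (right_mem_segment ℝ _ _) hsε
  filter_upwards [hg, hz', hd, hs, hN, negligible_iff_eventually.1 (hval y hy) (N + m + q + m),
    negligible_iff_eventually.1 (hval _ hy'B) (N + m + q + m), Ioo_mem_nhdsGT one_pos]
    with ε hgε ⟨_, hmax⟩ hdε hsε hNε hgy hgy' ⟨hε, hε1⟩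
  have key := mul_norm_fderiv_apply_le hgε hsε fun w hw => hmax hw
  set T := fderiv ℝ (g ε) (y ε)
  set D := ‖fderiv ℝ (fderiv ℝ (g ε)) (z ε)‖
  have hD : D * (ε ^ (N + m) * ‖ε ^ q • h ε‖) ^ 2 ≤ ε ^ (N + m + q) * ε ^ m :=
    calc D * (ε ^ (N + m) * ‖ε ^ q • h ε‖) ^ 2 ≤ D * (ε ^ (N + m) * ε ^ q) ^ 2 := by gcongr
      _ = ε ^ N * D * ε ^ q * (ε ^ (N + m + q) * ε ^ m) := by ring
      _ ≤ ε ^ (N + m + q) * ε ^ m :=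
        mul_le_of_le_one_left (by positivity)
          (mul_le_one₀ hNε (pow_nonneg hε.le q) (pow_le_one₀ hε.le hε1.le))
  have hTh' : ε ^ (N + m + q) * ‖T (h ε)‖ ≤ ε ^ (N + m + q) * (3 * ε ^ m) := by
    rw [map_smul, norm_smul, Real.norm_of_nonneg (pow_nonneg hε.le q), ← mul_assoc,
      ← pow_add] at key
    rw [pow_add _ (N + m + q)] at hgy hgy'
    linarith
  calc ‖T‖ ≤ 2 * ‖T (h ε)‖ := hTh ε
    _ ≤ 2 * (3 * ε ^ m) := by gcongr; exact le_of_mul_le_mul_left hTh' (by positivity)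
    _ = 6 * ε ^ m := by ring

end GeneralizedFunctions

theorem negligible_iteratedFDeriv_of_negligible_on_sharpBall {V W : Type u}
    [NormedAddCommGroup V] [NormedSpace ℝ V] [NormedAddCommGroup W] [NormedSpace ℝ W]
    {x : ℝ → V} {r : ℝ} (hx : Moderate x) (n : ℕ) {f : ℝ → V → W}
    (hf : ∀ᶠ ε in 𝓝[>] 0, ContDiff ℝ ∞ (f ε))
    (hmod : ∀ k, ∀ w ∈ sharpBall x r, Moderate fun ε => iteratedFDeriv ℝ k (f ε) (w ε))
    (hval : ∀ w ∈ sharpBall x r, Negligible fun ε => f ε (w ε)) :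
    ∀ w ∈ sharpBall x r, Negligible fun ε => iteratedFDeriv ℝ n (f ε) (w ε) := by
  induction n generalizing W f with
  | zero =>
    exact fun w hw => (hval w hw).of_norm_le (.of_forall fun ε => norm_iteratedFDeriv_zero.le)
  | succ n ih =>
    have hDf : ∀ w ∈ sharpBall x r, Negligible fun ε => fderiv ℝ (f ε) (w ε) :=
      fun w hw => negligible_fderiv_of_negligible_on_sharpBall hx
        (hf.mono fun ε hε => hε.of_le (WithTop.coe_le_coe.2 le_top))
        (fun w hw => (hmod 2 w hw).of_norm_le (.of_forall fun ε => by
          rw [← norm_iteratedFDeriv_fderiv, norm_iteratedFDeriv_one]))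
        hval hw
    refine fun w hw => (ih (hf.mono fun ε hε => hε.fderiv_right le_rfl)
      (fun k w hw => (hmod (k + 1) w hw).of_norm_le
        (.of_forall fun ε => norm_iteratedFDeriv_fderiv.le))
      hDf w hw).of_norm_le (.of_forall fun ε => norm_iteratedFDeriv_fderiv.ge)

theorem pointValues_of_generalized_functions_general (d : ℕ)
    (A : Set (ℝ → EuclideanSpace ℝ (Fin d)))
    (u : ℝ → EuclideanSpace ℝ (Fin d) → ℂ) (hu : EMod A u) :
    -- (1) point values are well-defined
    ((∀ x, IsReprOfPointOf A x → Moderate fun ε => u ε (x ε)) ∧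
      (∀ (v : ℝ → EuclideanSpace ℝ (Fin d) → ℂ) (x y : ℝ → EuclideanSpace ℝ (Fin d)),
        EMod A v → GEq A u v → IsReprOfPointOf A x → EqvNet x y →
          Negligible fun ε => u ε (x ε) - v ε (y ε))) ∧
    -- (2) vanishing on a sharp neighbourhood of an interior point kills all derivatives there
    (∀ x : ℝ → EuclideanSpace ℝ (Fin d), Moderate x →
      (∃ r > 0, ∀ y : ℝ → EuclideanSpace ℝ (Fin d), Moderate y →
          sharpNorm (fun ε => y ε - x ε) < r →
          y ∈ A ∧ Negligible fun ε => u ε (y ε)) →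
      ∀ n : ℕ, Negligible fun ε => iteratedFDeriv ℝ n (u ε) (x ε)) ∧
    -- (3) on an open set, u = 0 iff all point values vanish
    (SharpOpen A →
      (NNeg A u ↔ ∀ x, IsReprOfPointOf A x → Negligible fun ε => u ε (x ε))) := by
  obtain ⟨hsmooth, hmodu⟩ := hu
  have hvanish : ∀ x r, Moderate x →
      (∀ w ∈ sharpBall x r, w ∈ A ∧ Negligible fun ε => u ε (w ε)) →
      ∀ n, ∀ w ∈ sharpBall x r, Negligible fun ε => iteratedFDeriv ℝ n (u ε) (w ε) :=
    fun x r hx hA n => negligible_iteratedFDeriv_of_negligible_on_sharpBall hx n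
      (eventually_nhdsGT_zero_of_forall_lt_one hsmooth)
      (fun k w hw => hmodu k w (isReprOfPointOf_of_mem hw.1 (hA w hw).1)) fun w hw => (hA w hw).2
  refine ⟨⟨fun x hx => (hmodu 0 x hx).of_norm_le (.of_forall fun ε => norm_iteratedFDeriv_zero.ge),
    fun v x y hv huv hx hxy => ?_⟩,
    fun x hx ⟨r, hr, hA⟩ n => hvanish x r hx (fun w hw => hA w hw.1 hw.2) n x
      ((EqvNet.refl x).mem_sharpBall hx hr),
    fun hopen => ⟨fun hu x hx => (hu.2 0 x hx).of_norm_le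
      (.of_forall fun ε => norm_iteratedFDeriv_zero.ge), fun hA => ⟨hsmooth, fun n x hx => ?_⟩⟩⟩
  · have huv' : Negligible fun ε => u ε (x ε) - v ε (x ε) :=
      (huv.2 0 x hx).of_norm_le
        (.of_forall fun ε => by simp only [norm_iteratedFDeriv_zero, le_rfl])
    have hv' : Negligible fun ε => v ε (x ε) - v ε (y ε) :=
      hxy.negligible_apply_sub_apply (eventually_nhdsGT_zero_of_forall_lt_one fun ε h₀ h₁ =>
        (hv.1 ε h₀ h₁).of_le (WithTop.coe_le_coe.2 le_top))
        (fun z hz => (hv.2 1 z hz).of_norm_le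
          (.of_forall fun ε => (norm_iteratedFDeriv_one _).ge)) hx
    simpa using huv'.add hv'
  · obtain ⟨hxmod, a, ha, hxa⟩ := hx
    obtain ⟨r, hr, hball⟩ := hopen.2 a ha
    refine hvanish a r (hopen.1 a ha) (fun w hw => ⟨hball w hw.1 hw.2, ?_⟩) n x
      (hxa.mem_sharpBall hxmod hr)
    exact hA w (isReprOfPointOf_of_mem hw.1 (hball w hw.1 hw.2))

/-- Proposition 3.6: point values of generalized functions. -/
theorem pointValues_of_generalized_functions (d : ℕ)
    (A : Set (ℝ → EuclideanSpace ℝ (Fin d))) (hne : A.Nonempty)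
    (hmod : ∀ x ∈ A, Moderate x)
    (u : ℝ → EuclideanSpace ℝ (Fin d) → ℂ) (hu : EMod A u) :
    -- (1) point values are well-defined
    ((∀ x, IsReprOfPointOf A x → Moderate fun ε => u ε (x ε)) ∧
      (∀ (v : ℝ → EuclideanSpace ℝ (Fin d) → ℂ) (x y : ℝ → EuclideanSpace ℝ (Fin d)),
        EMod A v → GEq A u v → IsReprOfPointOf A x → EqvNet x y →
          Negligible fun ε => u ε (x ε) - v ε (y ε))) ∧
    -- (2) vanishing on a sharp neighbourhood of an interior point kills all derivatives there
    (∀ x : ℝ → EuclideanSpace ℝ (Fin d), Moderate x →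
      (∃ r > 0, ∀ y : ℝ → EuclideanSpace ℝ (Fin d), Moderate y →
          sharpNorm (fun ε => y ε - x ε) < r →
          y ∈ A ∧ Negligible fun ε => u ε (y ε)) →
      ∀ n : ℕ, Negligible fun ε => iteratedFDeriv ℝ n (u ε) (x ε)) ∧
    -- (3) on an open set, u = 0 iff all point values vanish
    (SharpOpen A →
      (NNeg A u ↔ ∀ x, IsReprOfPointOf A x → Negligible fun ε => u ε (x ε))) :=
  pointValues_of_generalized_functions_general d A u hu
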